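/- Let $\sigma \in S_n$ be $I$-reduced, where $I = \{s_1,\ldots,s_{n-1}\} \setminus \{s_{k_1+1},\ldots,s_{k_r+1}\}$ with $0 \leq k_1 < \ldots < k_r < n-1$ satisfying $k_i = n-1-k_{r+1-i}$ (and $k_1 \neq 0$). Let $F(\sigma) = w_0\sigma w_0$. Suppose there exists $u$ in the parabolic subgroup $W_I$ generated by $I$ such that $u \sigma F(u)^{-1} \leq s_{k_1+1}s_{k_1+2}\cdots s_{n-1}$ in the Bruhat order. Then $\sigma(\{1,\ldots,k_i\}) \subseteq \{1,\ldots,k_i+1\}$ for all $1 \leq i \leq r$. -/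

import Mathlib

/-! Read left to right, the word `s_{a+1} s_{a+2} ⋯ s_{n-1}` (`a = k₁`) is the only reduced word
of the cycle `a ↦ a + 1 ↦ ⋯ ↦ n - 1 ↦ a`: its last letter must be a right descent, and the cycle
has only one. Hence every `w` below it in the Bruhat order is the product of an increasing word, so
`w z ≤ z + 1` for all `z`. Every `u ∈ W_I` stabilises each initial segment `{0, …, k_i}` of
0-based positions, and by the symmetry `k_i = n - 1 - k_{r+1-i}` its conjugate `F(u) = w₀ u w₀`
stabilises each `{0, …, k_i - 1}`. For `w = u σ F(u)⁻¹` and `x < k_i` this gives `F(u) x < k_i`,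
so `w (F(u) x) ≤ k_i`, and `σ x = u⁻¹ (w (F(u) x)) ≤ k_i`. -/

/-- The simple reflection `s_{i+1}` (1-based): swap of 0-based positions `i`, `i+1`. -/
def simpleRefl (n i : ℕ) : Equiv.Perm (Fin n) :=
  if h : i + 1 < n then Equiv.swap ⟨i, Nat.lt_of_succ_lt h⟩ ⟨i + 1, h⟩ else 1

/-- The Coxeter length of a permutation of `Fin n`: its number of inversions. -/
def lenPerm {n : ℕ} (σ : Equiv.Perm (Fin n)) : ℕ :=
  (Finset.univ.filter fun p : Fin n × Fin n => p.1 < p.2 ∧ σ p.2 < σ p.1).card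

/-- The Bruhat order on `Sₙ`, via the subword property: `u ≤ v` iff `u` is the
product of a subword of some reduced word for `v` (words in 0-based indices). -/
def BruhatLE (n : ℕ) (u v : Equiv.Perm (Fin n)) : Prop :=
  ∃ L : List ℕ, (∀ j ∈ L, j + 1 < n) ∧ (L.map (simpleRefl n)).prod = v ∧
    L.length = lenPerm v ∧
    ∃ L' : List ℕ, L'.Sublist L ∧ (L'.map (simpleRefl n)).prod = u

/-- The subset `I = S \ {s_{k₁+1},…,s_{k_r+1}}` of simple reflections. -/
def Iset (n r : ℕ) (k : Fin r → ℕ) : Set (Equiv.Perm (Fin n)) :=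
  {p | ∃ j : ℕ, 1 ≤ j ∧ j ≤ n - 1 ∧ (∀ i : Fin r, j ≠ k i + 1) ∧
    p = simpleRefl n (j - 1)}

open Equiv
open scoped Pointwise

section SimpleRefl

variable {n j : ℕ}

lemma simpleRefl_apply_val (hj : j + 1 < n) (x : Fin n) :
    (simpleRefl n j x).val = if x.val = j then j + 1 else if x.val = j + 1 then j else x.val := by
  rw [simpleRefl, dif_pos hj, swap_apply_def]
  split_ifs <;> simp_all [Fin.ext_iff]

lemma simpleRefl_apply_left (hj : j + 1 < n) : simpleRefl n j ⟨j, by omega⟩ = ⟨j + 1, hj⟩ := by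
  rw [simpleRefl, dif_pos hj, swap_apply_left]

lemma simpleRefl_apply_right (hj : j + 1 < n) : simpleRefl n j ⟨j + 1, hj⟩ = ⟨j, by omega⟩ := by
  rw [simpleRefl, dif_pos hj, swap_apply_right]

lemma simpleRefl_of_le (hj : n ≤ j + 1) : simpleRefl n j = 1 :=
  dif_neg (by omega)

lemma simpleRefl_mul_self : simpleRefl n j * simpleRefl n j = 1 := by
  unfold simpleRefl
  split_ifs
  · exact swap_mul_self _ _
  · exact mul_one 1

lemma simpleRefl_apply_simpleRefl (x : Fin n) :
    simpleRefl n j (simpleRefl n j x) = x := by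
  rw [← Perm.mul_apply, simpleRefl_mul_self, Perm.one_apply]

lemma simpleRefl_apply_of_ne {x : Fin n} (h₁ : x.val ≠ j) (h₂ : x.val ≠ j + 1) :
    simpleRefl n j x = x := by
  unfold simpleRefl
  split_ifs
  · exact swap_apply_of_ne_of_ne (by simpa [Fin.ext_iff] using h₁) (by simpa [Fin.ext_iff] using h₂)
  · rfl

lemma simpleRefl_apply_val_le (x : Fin n) : (simpleRefl n j x).val ≤ x.val + 1 := by
  rcases Nat.lt_or_ge (j + 1) n with hj | hj
  · rw [simpleRefl_apply_val hj]
    split_ifs <;> omega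
  · rw [simpleRefl_of_le hj, Perm.one_apply]
    omega

end SimpleRefl

section Length

variable {n j : ℕ}

lemma lenPerm_one : lenPerm (1 : Perm (Fin n)) = 0 := by
  rw [lenPerm, Finset.card_eq_zero, Finset.filter_eq_empty_iff]
  exact fun p _ h => lt_asymm h.1 h.2

lemma lenPerm_mul_simpleRefl_of_lt (hj : j + 1 < n) (π : Perm (Fin n))
    (h : π ⟨j, by omega⟩ < π ⟨j + 1, hj⟩) :
    lenPerm (π * simpleRefl n j) = lenPerm π + 1 := by
  set s := simpleRefl n j
  set a : Fin n := ⟨j, by omega⟩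
  set b : Fin n := ⟨j + 1, hj⟩
  have hlt : a < b := Fin.mk_lt_mk.mpr (Nat.lt_succ_self j)
  have hss : ∀ x, s (s x) = x := simpleRefl_apply_simpleRefl
  have hcount : lenPerm (π * s) = (Finset.univ.filter fun q : Fin n × Fin n =>
      s q.1 < s q.2 ∧ π q.2 < π q.1).card := by
    refine Finset.card_bij' (fun p _ => (s p.1, s p.2)) (fun q _ => (s q.1, s q.2))
      (fun p hp => ?_) (fun q hq => ?_) (fun p _ => by simp [hss]) (fun q _ => by simp [hss])
    · rw [Finset.mem_filter] at hp ⊢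
      simpa [hss] using hp
    · rw [Finset.mem_filter] at hq ⊢
      simpa [hss] using hq
  -- `s` preserves the order of every pair except `{a, b}`, where it creates the inversion `(b, a)`
  have hinv : (Finset.univ.filter fun q : Fin n × Fin n => s q.1 < s q.2 ∧ π q.2 < π q.1) =
      insert (b, a) (Finset.univ.filter fun q : Fin n × Fin n => q.1 < q.2 ∧ π q.2 < π q.1) := by
    have hsa : s a = b := simpleRefl_apply_left hj
    have hsb : s b = a := simpleRefl_apply_right hj
    ext ⟨x, y⟩
    simp only [Finset.mem_filter, Finset.mem_insert, Finset.mem_univ, true_and, Prod.mk.injEq]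
    by_cases hba : x = b ∧ y = a
    · obtain ⟨rfl, rfl⟩ := hba
      simp [hsa, hsb, h, hlt]
    by_cases hab : x = a ∧ y = b
    · obtain ⟨rfl, rfl⟩ := hab
      simp [hsa, hsb, h.not_gt, hlt.not_gt, hlt.ne]
    have hord : s x < s y ↔ x < y := by
      simp only [Fin.ext_iff, a, b] at hab hba
      rw [Fin.lt_def, Fin.lt_def, simpleRefl_apply_val hj, simpleRefl_apply_val hj]
      split_ifs <;> omega
    rw [hord]
    tauto
  rw [hcount, hinv, Finset.card_insert_of_notMem]
  · rfl
  · simp [hlt.not_gt]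

lemma lenPerm_mul_simpleRefl_of_gt (hj : j + 1 < n) (π : Perm (Fin n))
    (h : π ⟨j + 1, hj⟩ < π ⟨j, by omega⟩) :
    lenPerm (π * simpleRefl n j) + 1 = lenPerm π := by
  have h' : (π * simpleRefl n j) ⟨j, by omega⟩ < (π * simpleRefl n j) ⟨j + 1, hj⟩ := by
    rwa [Perm.mul_apply, Perm.mul_apply, simpleRefl_apply_left, simpleRefl_apply_right]
  rw [← lenPerm_mul_simpleRefl_of_lt hj _ h', mul_assoc, simpleRefl_mul_self, mul_one]

lemma lenPerm_mul_simpleRefl_le (π : Perm (Fin n)) (j : ℕ) :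
    lenPerm (π * simpleRefl n j) ≤ lenPerm π + 1 := by
  rcases Nat.lt_or_ge (j + 1) n with hj | hj
  · have hne : π ⟨j, by omega⟩ ≠ π ⟨j + 1, hj⟩ := π.injective.ne (by simp [Fin.ext_iff])
    rcases hne.lt_or_gt with h | h
    · exact (lenPerm_mul_simpleRefl_of_lt hj π h).le
    · have := lenPerm_mul_simpleRefl_of_gt hj π h
      omega
  · rw [simpleRefl_of_le hj, mul_one]
    omega

lemma lenPerm_prod_le (L : List ℕ) : lenPerm (L.map (simpleRefl n)).prod ≤ L.length := by
  induction L using List.reverseRecOn with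
  | nil => simp [lenPerm_one]
  | append_singleton L j ih =>
    simp only [List.map_append, List.map_singleton, List.prod_append, List.prod_singleton,
      List.length_append, List.length_singleton]
    exact (lenPerm_mul_simpleRefl_le _ j).trans (Nat.add_le_add_right ih 1)

end Length

def IsReducedWord (n : ℕ) (L : List ℕ) (w : Perm (Fin n)) : Prop :=
  (∀ j ∈ L, j + 1 < n) ∧ (L.map (simpleRefl n)).prod = w ∧ L.length = lenPerm w

lemma IsReducedWord.of_append_singleton {n j : ℕ} {L : List ℕ} {w : Perm (Fin n)}
    (hL : IsReducedWord n (L ++ [j]) w) (hj : j + 1 < n) :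
    w ⟨j + 1, hj⟩ < w ⟨j, by omega⟩ ∧ IsReducedWord n L (w * simpleRefl n j) := by
  obtain ⟨hdom, hprod, hlen⟩ := hL
  have hprefix : (L.map (simpleRefl n)).prod = w * simpleRefl n j := by
    rw [← hprod, List.map_append, List.prod_append, List.map_singleton, List.prod_singleton,
      mul_assoc, simpleRefl_mul_self, mul_one]
  have hle := lenPerm_prod_le (n := n) L
  rw [hprefix] at hle
  rw [List.length_append, List.length_singleton] at hlen
  have hdesc : w ⟨j + 1, hj⟩ < w ⟨j, by omega⟩ := by
    have hne : w ⟨j + 1, hj⟩ ≠ w ⟨j, by omega⟩ := w.injective.ne (by simp [Fin.ext_iff])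
    refine hne.lt_of_le (not_lt.mp fun hasc => ?_)
    have := lenPerm_mul_simpleRefl_of_lt hj w hasc
    omega
  refine ⟨hdesc, fun i hi => hdom i (List.mem_append_left _ hi), hprefix, ?_⟩
  have := lenPerm_mul_simpleRefl_of_gt hj w hdesc
  omega

/-- `s_{a+1} s_{a+2} ⋯ s_{a+d}` (1-based): the cycle `a ↦ a + 1 ↦ ⋯ ↦ a + d ↦ a`. -/
def risingCycle (n a d : ℕ) : Perm (Fin n) :=
  ((List.range d).map fun j => simpleRefl n (a + j)).prod

section RisingCycle

variable {n a d : ℕ}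

lemma risingCycle_succ : risingCycle n a (d + 1) = risingCycle n a d * simpleRefl n (a + d) := by
  simp [risingCycle, List.range_succ]

lemma risingCycle_apply_val (had : a + d < n) (x : Fin n) :
    (risingCycle n a d x).val =
      if x.val < a ∨ a + d < x.val then x.val else if x.val = a + d then a else x.val + 1 := by
  induction d generalizing x with
  | zero =>
    simp only [risingCycle, List.range_zero, List.map_nil, List.prod_nil, Perm.one_apply]
    split_ifs <;> omega
  | succ d ih =>
    rw [risingCycle_succ, Perm.mul_apply, ih (by omega), simpleRefl_apply_val (by omega)]
    split_ifs <;> omega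

lemma risingCycle_descent {j : ℕ} (had : a + d < n) (hj : j + 1 < n)
    (h : risingCycle n a d ⟨j + 1, hj⟩ < risingCycle n a d ⟨j, by omega⟩) : j + 1 = a + d := by
  rw [Fin.lt_def, risingCycle_apply_val had, risingCycle_apply_val had, Fin.val_mk, Fin.val_mk] at h
  split_ifs at h <;> omega

lemma IsReducedWord.eq_range_of_risingCycle {L : List ℕ} (had : a + d < n)
    (hL : IsReducedWord n L (risingCycle n a d)) : L = (List.range d).map (a + ·) := by
  induction d generalizing L with
  | zero =>
    have hlen := hL.2.2
    rw [show risingCycle n a 0 = 1 from rfl, lenPerm_one, List.length_eq_zero_iff] at hlen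
    simp [hlen]
  | succ d ih =>
    rcases List.eq_nil_or_concat L with rfl | ⟨L, j, rfl⟩
    · have h := congrArg (fun w : Perm (Fin n) => (w ⟨a + d + 1, had⟩).val) hL.2.1
      simp only [List.map_nil, List.prod_nil, Perm.one_apply, risingCycle_apply_val had] at h
      split_ifs at h <;> omega
    rw [List.concat_eq_append] at hL ⊢
    have hj : j + 1 < n := hL.1 j (by simp)
    obtain ⟨hdesc, hL⟩ := hL.of_append_singleton hj
    obtain rfl : j = a + d := by
      have := risingCycle_descent had hj hdesc
      omega
    rw [risingCycle_succ, mul_assoc, simpleRefl_mul_self, mul_one] at hL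
    rw [ih (by omega) hL, List.range_succ, List.map_append]
    rfl

end RisingCycle

section IncreasingWord

variable {n : ℕ}

lemma prod_simpleRefl_apply_of_lt {L : List ℕ} {x : Fin n} (h : ∀ b ∈ L, x.val < b) :
    (L.map (simpleRefl n)).prod x = x := by
  induction L with
  | nil => rfl
  | cons b L ih =>
    have hb := h b List.mem_cons_self
    rw [List.map_cons, List.prod_cons, Perm.mul_apply,
      ih fun c hc => h c (List.mem_cons_of_mem b hc), simpleRefl_apply_of_ne (by omega) (by omega)]

lemma prod_simpleRefl_apply_val_le_of_pairwise {L : List ℕ} (hL : L.Pairwise (· < ·))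
    (x : Fin n) : ((L.map (simpleRefl n)).prod x).val ≤ x.val + 1 := by
  induction L with
  | nil => simp
  | cons b L ih =>
    obtain ⟨hb, hL⟩ := List.pairwise_cons.mp hL
    rw [List.map_cons, List.prod_cons, Perm.mul_apply]
    by_cases hy : ((L.map (simpleRefl n)).prod x).val = x.val + 1
    · -- `L` moved `x`, so it has a letter `c ≤ x`; then `b < c` and `s_b` fixes `x + 1`
      obtain ⟨c, hc, hcx⟩ : ∃ c ∈ L, c ≤ x.val := by
        by_contra! hc
        rw [prod_simpleRefl_apply_of_lt hc] at hy
        omega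
      have := hb c hc
      rw [simpleRefl_apply_of_ne (by omega) (by omega)]
      omega
    · have := simpleRefl_apply_val_le (j := b) ((L.map (simpleRefl n)).prod x)
      have := ih hL
      omega

lemma apply_val_le_succ_of_bruhatLE_risingCycle {a d : ℕ} (had : a + d < n) {w : Perm (Fin n)}
    (hw : BruhatLE n w (risingCycle n a d)) (z : Fin n) : (w z).val ≤ z.val + 1 := by
  obtain ⟨L, hdom, hprod, hlen, L', hsub, rfl⟩ := hw
  have hL := IsReducedWord.eq_range_of_risingCycle had ⟨hdom, hprod, hlen⟩
  refine prod_simpleRefl_apply_val_le_of_pairwise (List.Pairwise.sublist hsub ?_) z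
  rw [hL]
  exact List.pairwise_lt_range.map _ fun _ _ h => Nat.add_lt_add_left h _

end IncreasingWord

section Parabolic

variable {n r : ℕ} {k : Fin r → ℕ} {u : Perm (Fin n)}

lemma val_le_iff_of_mem_closure_Iset (hu : u ∈ Subgroup.closure (Iset n r k)) (i : Fin r)
    (x : Fin n) : (u x).val ≤ k i ↔ x.val ≤ k i := by
  have hsub : Subgroup.closure (Iset n r k) ≤
      MulAction.stabilizer (Perm (Fin n)) {y : Fin n | y.val ≤ k i} := by
    rw [Subgroup.closure_le]
    rintro _ ⟨j, hj₁, hjn, hjk, rfl⟩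
    refine MulAction.mem_stabilizer_set.mpr fun y => ?_
    have := hjk i
    simp only [Perm.smul_def, Set.mem_ofPred_eq, simpleRefl_apply_val (by omega : j - 1 + 1 < n)]
    split_ifs <;> omega
  exact MulAction.mem_stabilizer_set.mp (hsub hu) x

lemma val_lt_of_mem_closure_Iset_rev_conj (hu : u ∈ Subgroup.closure (Iset n r k)) (i : Fin r)
    {x : Fin n} (hx : x.val < n - 1 - k i) :
    ((Fin.revPerm * u * Fin.revPerm : Perm (Fin n)) x).val < n - 1 - k i := by
  have h := (val_le_iff_of_mem_closure_Iset hu i (Fin.rev x)).not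
  simp only [Perm.mul_apply, Fin.revPerm_apply, Fin.val_rev] at h ⊢
  omega

end Parabolic

theorem image_bound_of_bruhat_le_general (n r : ℕ) (hr : 0 < r)
    (k : Fin r → ℕ)
    (hkn : ∀ i, k i < n - 1)
    (hsym : ∀ i : Fin r, k i = n - 1 - k i.rev)
    (σ : Equiv.Perm (Fin n))
    (u : Equiv.Perm (Fin n)) (hu : u ∈ Subgroup.closure (Iset n r k))
    (hle : BruhatLE n (u * σ * (Fin.revPerm * u * Fin.revPerm)⁻¹)
      (((List.range (n - 1 - k ⟨0, hr⟩)).map fun j =>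
        simpleRefl n (k ⟨0, hr⟩ + j)).prod)) :
    ∀ (i : Fin r) (x : Fin n), x.val < k i → (σ x).val < k i + 1 := by
  intro i x hx
  set F := Fin.revPerm * u * Fin.revPerm
  set w := u * σ * F⁻¹
  have hFx : (F x).val < k i := by
    rw [hsym i] at hx ⊢
    exact val_lt_of_mem_closure_Iset_rev_conj hu i.rev hx
  have hwFx : (w (F x)).val ≤ k i := by
    have := apply_val_le_succ_of_bruhatLE_risingCycle (by have := hkn ⟨0, hr⟩; omega) hle (F x)
    omega
  have hσx : σ x = u⁻¹ (w (F x)) := by simp [w]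
  have := (val_le_iff_of_mem_closure_Iset (inv_mem hu) i _).mpr hwFx
  rw [hσx]
  omega

theorem image_bound_of_bruhat_le (n r : ℕ) (hn : 2 ≤ n) (hr : 0 < r)
    (k : Fin r → ℕ) (hmono : StrictMono k) (hk1 : k ⟨0, hr⟩ ≠ 0)
    (hkn : ∀ i, k i < n - 1)
    (hsym : ∀ i : Fin r, k i = n - 1 - k i.rev)
    (σ : Equiv.Perm (Fin n))
    (hred : ∀ v ∈ Subgroup.closure (Iset n r k),
      lenPerm (v * σ) = lenPerm v + lenPerm σ)
    (u : Equiv.Perm (Fin n)) (hu : u ∈ Subgroup.closure (Iset n r k))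
    (hle : BruhatLE n (u * σ * (Fin.revPerm * u * Fin.revPerm)⁻¹)
      (((List.range (n - 1 - k ⟨0, hr⟩)).map fun j =>
        simpleRefl n (k ⟨0, hr⟩ + j)).prod)) :
    ∀ (i : Fin r) (x : Fin n), x.val < k i → (σ x).val < k i + 1 :=
  image_bound_of_bruhat_le_general n r hr k hkn hsym σ u hu hle
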